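/- The permutations Λ(α), Λ(β), Λ(γ) of {0,1}* each have order exactly 2, Λ(β) and Λ(γ) commute, and Λ(βγ) has order exactly 2; consequently the subgroup of the permutation group of {0,1}* generated by Λ(β) and Λ(γ) is isomorphic to the Klein four-group C₂ × C₂. -/

import Mathlib

noncomputable section

/-- The action of `Equiv.Perm X` on `X → G` by permuting coordinates. -/
def permAut (X G : Type) [Group G] : Equiv.Perm X →* MulAut (X → G) where
  toFun σ :=
  { toFun := fun f => f ∘ ⇑σ⁻¹
    invFun := fun f => f ∘ ⇑σ
    left_inv := fun f => by funext x; simp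
    right_inv := fun f => by funext x; simp
    map_mul' := fun f g => rfl }
  map_one' := by ext f x; simp
  map_mul' := fun σ τ => by
    ext f x
    simp [Function.comp, mul_inv_rev]

/-- The wreath product `G ≀ C₂` with base alphabet `Bool`. -/
abbrev Wr (G : Type) [Group G] := (Bool → G) ⋊[permAut Bool G] Equiv.Perm Bool

/-- `pair g₀ g₁` is the element `⟨g₀, g₁⟩` of the base group. -/
def pair {G : Type} [Group G] (g₀ g₁ : G) : Bool → G := fun x => bif x then g₁ else g₀

/-- The nontrivial element of `Sym({0,1})`. -/
def σswap : Equiv.Perm Bool := Equiv.swap false true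

section Act

variable {G : Type} [Group G]

/-- The action on finite binary words associated with a wreath recursion `Φ`. -/
def act (Φ : G →* Wr G) : G → List Bool → List Bool
  | _, [] => []
  | g, x :: v => (Φ g).right x :: act Φ ((Φ g).left x) v

lemma act_one (Φ : G →* Wr G) (v : List Bool) : act Φ 1 v = v := by
  induction v with
  | nil => rfl
  | cons x v ih => simp [act, map_one, ih]

lemma act_mul (Φ : G →* Wr G) (g h : G) (v : List Bool) :
    act Φ (g * h) v = act Φ h (act Φ g v) := by
  induction v generalizing g h with
  | nil => rfl
  | cons x v ih =>
    have hswap : ∀ (σ τ : Equiv.Perm Bool) (x : Bool), σ (τ x) = τ (σ x) := by decide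
    have hinv : ∀ σ : Equiv.Perm Bool, σ⁻¹ = σ := by decide
    have h1 : ((Φ g).right * (Φ h).right) x = (Φ h).right ((Φ g).right x) := by
      rw [Equiv.Perm.mul_apply, hswap]
    have h2 : ((Φ g).left * (permAut Bool G ((Φ g).right)) (Φ h).left) x
        = (Φ g).left x * (Φ h).left ((Φ g).right x) := by
      show (Φ g).left x * (Φ h).left (((Φ g).right)⁻¹ x) = _
      rw [hinv]
    simp only [act, map_mul, SemidirectProduct.mul_right, SemidirectProduct.mul_left,
      h1, h2, ih]

/-- The associated action, as a permutation of the set of finite binary words. -/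
def actPerm (Φ : G →* Wr G) (g : G) : Equiv.Perm (List Bool) where
  toFun := act Φ g
  invFun := act Φ g⁻¹
  left_inv v := by rw [← act_mul, mul_inv_cancel, act_one]
  right_inv v := by rw [← act_mul, inv_mul_cancel, act_one]

end Act

namespace Fstar

/-- The free group on three generators `α`, `β`, `γ`. -/
abbrev F3 := FreeGroup (Fin 3)

def ga : F3 := FreeGroup.of 0
def gb : F3 := FreeGroup.of 1
def gc : F3 := FreeGroup.of 2

/-- The wreath recursion of the obstructed topological polynomial `f_*`:
`Φ(α) = ⟨α⁻¹, α⟩σ`, `Φ(β) = ⟨α, γ⟩`, `Φ(γ) = ⟨1, γβγ⁻¹⟩`. -/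
def Phi : F3 →* Wr F3 :=
  FreeGroup.lift ![⟨pair ga⁻¹ ga, σswap⟩, ⟨pair ga gc, 1⟩, ⟨pair 1 (gc * gb * gc⁻¹), 1⟩]

end Fstar


section Aux
open Fstar

lemma Phi_ga : Phi ga = ⟨pair ga⁻¹ ga, σswap⟩ := by simp [Phi, ga]
lemma Phi_gb : Phi gb = ⟨pair ga gc, 1⟩ := by simp [Phi, gb]
lemma Phi_gc : Phi gc = ⟨pair 1 (gc * gb * gc⁻¹), 1⟩ := by simp [Phi, gc]

lemma act_ga_false (v : List Bool) :
    act Phi ga (false :: v) = true :: act Phi ga⁻¹ v := by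
  simp [act, Phi_ga, pair, σswap]
lemma act_ga_true (v : List Bool) :
    act Phi ga (true :: v) = false :: act Phi ga v := by
  simp [act, Phi_ga, pair, σswap]
lemma act_gb_false (v : List Bool) :
    act Phi gb (false :: v) = false :: act Phi ga v := by
  simp [act, Phi_gb, pair]
lemma act_gb_true (v : List Bool) :
    act Phi gb (true :: v) = true :: act Phi gc v := by
  simp [act, Phi_gb, pair]
lemma act_gc_false (v : List Bool) :
    act Phi gc (false :: v) = false :: v := by
  simp [act, Phi_gc, pair, act_one]
lemma act_gc_true (v : List Bool) :
    act Phi gc (true :: v) = true :: act Phi (gc * gb * gc⁻¹) v := by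
  simp [act, Phi_gc, pair]

lemma Phi_ga_sq : Phi (ga * ga) = 1 := by
  rw [map_mul, Phi_ga]
  ext x
  · show (pair ga⁻¹ ga * (permAut Bool F3 σswap) (pair ga⁻¹ ga)) x = 1
    have : σswap⁻¹ = σswap := by decide
    cases x <;> simp [permAut, pair, this, σswap]
  · show (σswap * σswap) x = x
    revert x; decide

lemma act_Phi_eq_one {g : F3} (h : Phi g = 1) (v : List Bool) : act Phi g v = v := by
  cases v with
  | nil => rfl
  | cons x v =>
    show (Phi g).right x :: act Phi ((Phi g).left x) v = x :: v
    rw [h]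
    show (1 : Equiv.Perm Bool) x :: act Phi ((1 : Bool → F3) x) v = x :: v
    rw [Equiv.Perm.one_apply, Pi.one_apply, act_one]

lemma act_ga_sq (v : List Bool) : act Phi (ga * ga) v = v :=
  act_Phi_eq_one Phi_ga_sq v

lemma act_length (g : F3) (v : List Bool) : (act Phi g v).length = v.length := by
  induction v generalizing g with
  | nil => rfl
  | cons x v ih => simp [act, ih]

lemma key : ∀ n (v : List Bool), v.length ≤ n →
    act Phi (gb * gb) v = v ∧ act Phi (gc * gc) v = v ∧
    act Phi (gb * gc) v = act Phi (gc * gb) v := by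
  intro n
  induction n with
  | zero =>
    intro v hv
    have : v = [] := List.length_eq_zero_iff.mp (Nat.le_zero.mp hv)
    subst this
    exact ⟨rfl, rfl, rfl⟩
  | succ n ih =>
    intro v hv
    match v with
    | [] => exact ⟨rfl, rfl, rfl⟩
    | x :: v =>
      have hv' : v.length ≤ n := by simpa using hv
      -- useful facts at shorter length
      have hb2 : ∀ w : List Bool, w.length ≤ n → act Phi (gb * gb) w = w :=
        fun w hw => (ih w hw).1
      have hc2 : ∀ w : List Bool, w.length ≤ n → act Phi (gc * gc) w = w :=
        fun w hw => (ih w hw).2.1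
      have hcomm : ∀ w : List Bool, w.length ≤ n →
          act Phi (gb * gc) w = act Phi (gc * gb) w :=
        fun w hw => (ih w hw).2.2
      have hcinv : ∀ w : List Bool, w.length ≤ n → act Phi gc⁻¹ w = act Phi gc w := by
        intro w hw
        conv_lhs => rw [← hc2 w hw]
        rw [← act_mul]
        congr 1
        group
      refine ⟨?_, ?_, ?_⟩
      · rw [act_mul]
        cases x with
        | false =>
          rw [act_gb_false, act_gb_false, ← act_mul, act_ga_sq]
        | true =>
          rw [act_gb_true, act_gb_true, ← act_mul,
            hc2 v hv']
      · rw [act_mul]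
        cases x with
        | false => rw [act_gc_false, act_gc_false]
        | true =>
          rw [act_gc_true, act_gc_true, ← act_mul]
          have : gc * gb * gc⁻¹ * (gc * gb * gc⁻¹) = gc * (gb * gb) * gc⁻¹ := by group
          rw [this, act_mul, act_mul, hb2 _ (by rw [act_length]; exact hv'),
            ← act_mul, mul_inv_cancel, act_one]
      · rw [act_mul, act_mul]
        cases x with
        | false =>
          rw [act_gb_false, act_gc_false, act_gc_false, act_gb_false]
        | true =>
          rw [act_gb_true, act_gc_true, act_gc_true, act_gb_true]
          have L : act Phi (gc * (gc * gb * gc⁻¹)) v = act Phi (gb * gc) v := by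
            have e1 : gc * (gc * gb * gc⁻¹) = (gc * gc) * (gb * gc⁻¹) := by group
            rw [e1, act_mul, hc2 v hv', act_mul,
              hcinv _ (by rw [act_length]; exact hv'), ← act_mul]
          have R : act Phi ((gc * gb * gc⁻¹) * gc) v = act Phi (gc * gb) v := by
            congr 1; group
          rw [← act_mul, ← act_mul, L, R, hcomm v hv']

lemma act_gb_sq (v : List Bool) : act Phi (gb * gb) v = v :=
  (key v.length v le_rfl).1
lemma act_gc_sq (v : List Bool) : act Phi (gc * gc) v = v :=
  (key v.length v le_rfl).2.1
lemma act_comm (v : List Bool) : act Phi (gb * gc) v = act Phi (gc * gb) v :=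
  (key v.length v le_rfl).2.2

end Aux

section Klein

variable {G : Type*} [Group G]

lemma pow_val_add {x : G} (hx : x ^ 2 = 1) (a b : ZMod 2) :
    x ^ ((a + b).val) = x ^ a.val * x ^ b.val := by
  have h : ∀ c : ZMod 2, c = 0 ∨ c = 1 := by decide
  rcases h a with rfl | rfl <;> rcases h b with rfl | rfl <;>
    simp [show ((0 : ZMod 2)).val = 0 from rfl, show ((1 : ZMod 2)).val = 1 from rfl,
      show ((1 + 1 : ZMod 2)).val = 0 from rfl, ← pow_two, hx]

/-- Generic Klein four-group recognition lemma. -/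
lemma klein_iso (B C : G) (hB : B ^ 2 = 1) (hC : C ^ 2 = 1) (hBC : Commute B C)
    (hB1 : B ≠ 1) (hC1 : C ≠ 1) (hBC1 : B * C ≠ 1) :
    Nonempty ((Subgroup.closure {B, C} : Subgroup G) ≃*
      Multiplicative (ZMod 2) × Multiplicative (ZMod 2)) := by
  set φ : Multiplicative (ZMod 2) × Multiplicative (ZMod 2) →* G :=
  { toFun := fun p => B ^ (p.1.toAdd).val * C ^ (p.2.toAdd).val
    map_one' := by simp [show ((0 : ZMod 2)).val = 0 from rfl]
    map_mul' := fun p q => by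
      simp only [Prod.fst_mul, Prod.snd_mul, toAdd_mul]
      rw [pow_val_add hB, pow_val_add hC]
      exact (hBC.pow_pow _ _).mul_mul_mul_comm _ _ } with hφ
  have hinj : Function.Injective φ := by
    rw [injective_iff_map_eq_one]
    rintro ⟨a, b⟩ hab
    have h : ∀ c : Multiplicative (ZMod 2), c.toAdd = 0 ∨ c.toAdd = 1 := by decide
    have hone : ∀ c : Multiplicative (ZMod 2), c.toAdd = 0 → c = 1 := by decide
    have h1 : ∀ c : Multiplicative (ZMod 2), c.toAdd = 1 → c.toAdd.val = 1 := by decide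
    have hval0 : ((0 : ZMod 2)).val = 0 := rfl
    rcases h a with ha | ha <;> rcases h b with hb | hb
    · exact Prod.ext (hone a ha) (hone b hb)
    · exfalso; apply hC1
      simpa [hφ, ha, hval0, h1 b hb] using hab
    · exfalso; apply hB1
      simpa [hφ, hb, hval0, h1 a ha] using hab
    · exfalso; apply hBC1
      simpa [hφ, h1 a ha, h1 b hb] using hab
  have hrange : φ.range = Subgroup.closure {B, C} := by
    apply le_antisymm
    · rintro _ ⟨p, rfl⟩
      have hBmem : B ∈ Subgroup.closure {B, C} := Subgroup.subset_closure (by simp)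
      have hCmem : C ∈ Subgroup.closure {B, C} := Subgroup.subset_closure (by simp)
      exact mul_mem (pow_mem hBmem _) (pow_mem hCmem _)
    · rw [Subgroup.closure_le]
      rintro x (rfl | rfl)
      · exact ⟨(Multiplicative.ofAdd 1, 1), by
          simp [hφ, show ((1 : ZMod 2)).val = 1 from rfl,
            show ((0 : ZMod 2)).val = 0 from rfl]⟩
      · exact ⟨(1, Multiplicative.ofAdd 1), by
          simp [hφ, show ((1 : ZMod 2)).val = 1 from rfl,
            show ((0 : ZMod 2)).val = 0 from rfl]⟩
  exact ⟨(MulEquiv.subgroupCongr hrange).symm.trans (MonoidHom.ofInjective hinj).symm⟩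

end Klein

section Main
open Fstar

lemma actPerm_apply (g : F3) (v : List Bool) : actPerm Phi g v = act Phi g v := rfl

lemma actPerm_sq {g : F3} (h : ∀ v, act Phi (g * g) v = v) : (actPerm Phi g) ^ 2 = 1 := by
  refine Equiv.ext fun v => ?_
  rw [sq, Equiv.Perm.mul_apply]
  show act Phi g (act Phi g v) = v
  rw [← act_mul]; exact h v

lemma actPerm_ga_sq : (actPerm Phi ga) ^ 2 = 1 := actPerm_sq act_ga_sq
lemma actPerm_gb_sq : (actPerm Phi gb) ^ 2 = 1 := actPerm_sq act_gb_sq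
lemma actPerm_gc_sq : (actPerm Phi gc) ^ 2 = 1 := actPerm_sq act_gc_sq

lemma actPerm_ga_ne : actPerm Phi ga ≠ 1 := by
  intro h
  have := congrArg (fun e : Equiv.Perm (List Bool) => e [false]) h
  simp only [Equiv.Perm.one_apply] at this
  rw [actPerm_apply, act_ga_false] at this
  simp at this

lemma act_gb_ff : act Phi gb [false, false] = [false, true] := by
  rw [act_gb_false, act_ga_false]; rfl

lemma actPerm_gb_ne : actPerm Phi gb ≠ 1 := by
  intro h
  have := congrArg (fun e : Equiv.Perm (List Bool) => e [false, false]) h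
  simp only [Equiv.Perm.one_apply] at this
  rw [actPerm_apply, act_gb_ff] at this
  simp at this

lemma act_gc_ft : act Phi gc [false, true] = [false, true] := act_gc_false _

lemma act_gcinv_ft : act Phi gc⁻¹ [false, true] = [false, true] := by
  conv_lhs => rw [← act_gc_ft, ← act_mul, mul_inv_cancel, act_one]

lemma act_gc_tff : act Phi gc [true, false, false] = [true, false, true] := by
  rw [act_gc_true]
  congr 1

lemma actPerm_gc_ne : actPerm Phi gc ≠ 1 := by
  intro h
  have := congrArg (fun e : Equiv.Perm (List Bool) => e [true, false, false]) h
  simp only [Equiv.Perm.one_apply] at this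
  rw [actPerm_apply, act_gc_tff] at this
  simp at this

lemma actPerm_comm : Commute (actPerm Phi gb) (actPerm Phi gc) := by
  show _ = _
  refine Equiv.ext fun v => ?_
  rw [Equiv.Perm.mul_apply, Equiv.Perm.mul_apply]
  show act Phi gb (act Phi gc v) = act Phi gc (act Phi gb v)
  rw [← act_mul, ← act_mul, act_comm]

lemma act_gbgc_sq (v : List Bool) : act Phi ((gb * gc) * (gb * gc)) v = v := by
  rw [act_mul, act_comm, ← act_mul]
  have : gb * gc * (gc * gb) = gb * (gc * gc) * gb := by group
  rw [this, act_mul, act_mul, act_gc_sq, ← act_mul, act_gb_sq]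

lemma actPerm_gbgc_sq : (actPerm Phi (gb * gc)) ^ 2 = 1 := actPerm_sq act_gbgc_sq

lemma actPerm_gbgc_ne : actPerm Phi (gb * gc) ≠ 1 := by
  intro h
  have := congrArg (fun e : Equiv.Perm (List Bool) => e [false, false]) h
  simp only [Equiv.Perm.one_apply] at this
  rw [actPerm_apply, act_mul, act_gb_ff, act_gc_ft] at this
  simp at this

lemma actPerm_mul_gbgc :
    actPerm Phi gb * actPerm Phi gc = actPerm Phi (gb * gc) := by
  refine Equiv.ext fun v => ?_
  rw [Equiv.Perm.mul_apply]
  show act Phi gb (act Phi gc v) = act Phi (gb * gc) v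
  rw [← act_mul, act_comm]

end Main

open Fstar in
theorem stmt17 :
    orderOf (actPerm Phi ga) = 2 ∧
    orderOf (actPerm Phi gb) = 2 ∧
    orderOf (actPerm Phi gc) = 2 ∧
    Commute (actPerm Phi gb) (actPerm Phi gc) ∧
    orderOf (actPerm Phi (gb * gc)) = 2 ∧
    Nonempty
      ((Subgroup.closure {actPerm Phi gb, actPerm Phi gc} :
          Subgroup (Equiv.Perm (List Bool))) ≃*
        Multiplicative (ZMod 2) × Multiplicative (ZMod 2)) := by
  refine ⟨orderOf_eq_prime actPerm_ga_sq actPerm_ga_ne,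
    orderOf_eq_prime actPerm_gb_sq actPerm_gb_ne,
    orderOf_eq_prime actPerm_gc_sq actPerm_gc_ne,
    actPerm_comm,
    orderOf_eq_prime actPerm_gbgc_sq actPerm_gbgc_ne,
    klein_iso _ _ actPerm_gb_sq actPerm_gc_sq actPerm_comm
      actPerm_gb_ne actPerm_gc_ne ?_⟩
  rw [actPerm_mul_gbgc]
  exact actPerm_gbgc_ne
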